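/- arXiv:0909.3790 — 6 statements merged into one kernel-verified Lean document; each statement's English description precedes it below -/
import Mathlib

section
/- Every strongly connected synchronizing n-state automaton is strongly transitive; moreover, if u is a synchronizing word, then the automaton admits an independent collection of n words each of length at most |u| + n - 1. -/
/-- Action of a word on a state of a DFA. -/
def act {Q A : Type*} (δ : Q → A → Q) (q : Q) (w : List A) : Q := w.foldl δ q

/-- Preimage `S·w⁻¹ = {q : q·w ∈ S}` of a subset under a word. -/
def preim {Q A : Type*} [Fintype Q] [DecidableEq Q] (δ : Q → A → Q)
    (S : Finset Q) (w : List A) : Finset Q :=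
  Finset.univ.filter fun q => act δ q w ∈ S

/-!
After a synchronizing word `u` every state sits at the same state `q₀`, and by strong
connectivity every state `t` is reachable from `q₀` by a word of length less than `n`
(a repeated state along a longer path can be cut out). So `u` followed by such a word sends
every state to `t`, and these `n` words, one per target `t`, form an independent collection.
-/

section Automaton

variable {Q A : Type*} (δ : Q → A → Q)

lemma act_append (q : Q) (v w : List A) : act δ q (v ++ w) = act δ (act δ q v) w :=
  List.foldl_append

lemma exists_act_eq_length_lt_card [Fintype Q] {p t : Q} {v : List A} (hv : act δ p v = t) :
    ∃ w : List A, act δ p w = t ∧ w.length < Fintype.card Q := by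
  induction hlen : v.length using Nat.strong_induction_on generalizing v with
  | _ m ih =>
    subst hlen
    by_cases hshort : v.length < Fintype.card Q
    · exact ⟨v, hv, hshort⟩
    obtain ⟨i, j, hij, hstate⟩ := Fintype.exists_ne_map_eq_of_card_lt
      (fun i : Fin (v.length + 1) => act δ p (v.take i)) (by rw [Fintype.card_fin]; omega)
    wlog hlt : i < j generalizing i j
    · exact this j i hij.symm hstate.symm (lt_of_le_of_ne (not_lt.mp hlt) hij.symm)
    -- the segment of `v` between positions `i` and `j` is a loop and can be removed
    refine ih _ ?_ (v := v.take i ++ v.drop j) ?_ rfl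
    · have := j.isLt
      simp only [List.length_append, List.length_take, List.length_drop]
      omega
    · rw [act_append, hstate, ← act_append, List.take_append_drop, hv]

lemma exists_forall_act_eq_length_lt [Fintype Q]
    (hsc : ∀ p q : Q, ∃ v : List A, act δ p v = q)
    {u : List A} (hu : ∀ q q' : Q, act δ q u = act δ q' u) (t : Q) :
    ∃ w : List A, (∀ s, act δ s w = t) ∧ w.length < u.length + Fintype.card Q := by
  obtain ⟨v, hv⟩ := hsc (act δ t u) t
  obtain ⟨w, hw, hlen⟩ := exists_act_eq_length_lt_card δ hv
  refine ⟨u ++ w, fun s => ?_, by simp [hlen]⟩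
  rw [act_append, hu s t, hw]

end Automaton

theorem stmt2 {Q A : Type*} [Fintype Q] (δ : Q → A → Q) (n : ℕ)
    (hn : Fintype.card Q = n)
    (hsc : ∀ p q : Q, ∃ u : List A, act δ p u = q)
    (u : List A) (hu : ∀ q q' : Q, act δ q u = act δ q' u) :
    ∃ W : Fin n → List A,
      (∀ s t : Q, ∃ i, act δ s (W i) = t) ∧
      (∀ i, (W i).length ≤ u.length + n - 1) := by
  choose w hw hlen using exists_forall_act_eq_length_lt δ hsc hu
  let e : Fin n ≃ Q := (Fintype.equivFinOfCardEq hn).symm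
  refine ⟨w ∘ e, fun s t => ⟨e.symm t, by simp [hw]⟩, fun i => ?_⟩
  have := hlen (e i)
  rw [hn] at this
  exact Nat.le_sub_one_of_lt this
end

section
/- If an n-state synchronizing automaton A admits an independent collection W = (w₁, …, wₙ) with each |wᵢ| < kn, then for every subset S ⊆ Q the collection W satisfies the balance identity ∑_{i=1}^{n} [S·wᵢ⁻¹] = n·(|S|/|Q|)·[Q], where [T] denotes the characteristic vector of T ⊆ Q in ℝ^Q. -/
theorem stmt3 {Q A : Type*} [Fintype Q] [DecidableEq Q] (δ : Q → A → Q)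
    (n k : ℕ) (hn : Fintype.card Q = n)
    (hsync : ∃ w : List A, ∀ q q' : Q, act δ q w = act δ q' w)
    (W : Fin n → List A)
    (hlen : ∀ i, (W i).length < k * n)
    (hind : ∀ s t : Q, ∃ i, act δ s (W i) = t) :
    ∀ S : Finset Q, ∀ q : Q,
      (∑ i : Fin n, (if q ∈ preim δ S (W i) then (1 : ℝ) else 0)) =
        (n : ℝ) * ((S.card : ℝ) / (Fintype.card Q : ℝ)) *
          (if q ∈ (Finset.univ : Finset Q) then (1 : ℝ) else 0) := by
  intro S q
  set f : Fin n → Q := fun i => act δ q (W i) with hf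
  have hsurj : Function.Surjective f := fun t => hind q t
  have hbij : Function.Bijective f := by
    have : Fintype.card (Fin n) = Fintype.card Q := by simp [hn]
    exact (Fintype.bijective_iff_surjective_and_card f).2 ⟨hsurj, this⟩
  let e : Fin n ≃ Q := Equiv.ofBijective f hbij
  have hsum : (∑ i : Fin n, (if q ∈ preim δ S (W i) then (1 : ℝ) else 0))
      = ∑ t : Q, (if t ∈ S then (1 : ℝ) else 0) := by
    rw [← e.sum_comp (fun t => if t ∈ S then (1:ℝ) else 0)]
    refine Finset.sum_congr rfl fun i _ => ?_
    simp [preim, Equiv.ofBijective, e, f]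
  rw [hsum, Finset.sum_ite_mem, Finset.univ_inter, Finset.sum_const, nsmul_eq_mul, mul_one]
  have hn0 : (Fintype.card Q : ℝ) ≠ 0 := by
    have : 0 < Fintype.card Q := Fintype.card_pos_iff.2 ⟨q⟩
    positivity
  rw [hn, if_pos (Finset.mem_univ q), mul_one]
  rw [hn] at hn0
  field_simp
end

section
/- For the automaton B_n = A(n-2, 1) with n > 3 states, the subset S = C_b = {q₀, s₁} has the property that every word v with |S·v⁻¹| > |S| has length at least 2n - 3; hence the shortest extension word for S has length 2(n-2)+1 = 2n-3 > n, disproving the Extension conjecture. -/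
/-- State set of the automaton `A(m,k)`: `Sum.inl i` is `qᵢ` (i = 0,…,m) and
`Sum.inr j` is `s_{j+1}` (j = 0,…,k-1). -/
abbrev QA (m k : ℕ) := Fin (m + 1) ⊕ Fin k

/-- Transition function of `A(m,k)`; letter `false` is `a`, letter `true` is `b`.
`a`: qᵢ → q_{i+1 mod m+1}, sⱼ → q₂.  `b`: q₀ → s₁, sⱼ → s_{j+1} (j < k), s_k → q₀;
all other transitions are self-loops. -/
def deltaA (m k : ℕ) : QA m k → Bool → QA m k
  | Sum.inl i, false => Sum.inl (i + 1)
  | Sum.inr _, false => Sum.inl 2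
  | Sum.inl i, true =>
      if i = 0 then (if h : 0 < k then Sum.inr ⟨0, h⟩ else Sum.inl 0) else Sum.inl i
  | Sum.inr j, true =>
      if h : (j : ℕ) + 1 < k then Sum.inr ⟨(j : ℕ) + 1, h⟩ else Sum.inl 0

/-- Action of a word on a state of `A(m,k)`. -/
def actA (m k : ℕ) (q : QA m k) (w : List Bool) : QA m k := w.foldl (deltaA m k) q

/-- Preimage `S·w⁻¹ = {q : q·w ∈ S}`. -/
def preimA (m k : ℕ) (S : Finset (QA m k)) (w : List Bool) : Finset (QA m k) :=
  Finset.univ.filter fun q => actA m k q w ∈ S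

/-- `C_b = {q₀, s₁, …, s_k}`, the set of states moved by `b`. -/
def Cb (m k : ℕ) : Finset (QA m k) :=
  insert (Sum.inl 0) ((Finset.univ : Finset (Fin k)).image Sum.inr)


/-!
Read a word from its last letter: the preimages `T = S·v⁻¹` of `S = {q₀, s₁}` evolve by
`T ↦ T·x⁻¹`. Here `b` acts as the transposition of `q₀` and `s₁`, while `a⁻¹` turns the
cycle backwards, drops `s₁`, and adds `s₁` exactly when `q₂ ∈ T`; so `T` reaches three
states only from a pair `{q₂, qⱼ}` of cycle states. Every set of at most two states is
described by a `Shape`, and `Shape.cost` drops by at most one per letter, starts at `2m + 1`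
on `{q₀, s₁}` and is at most `1` on the pairs `{q₂, qⱼ}`. Hence every word of length
`< 2m + 1 = 2n - 3` has a preimage of size at most `2`. The bound is attained by
`{q₀, s₁} → {q_m} → ⋯ → {q₂} → {q₁, s₁} → {q₁, q₀} → ⋯ → {q₃, q₂}` and one more `a`.
-/

open Finset

section Preimage

variable {m k : ℕ}

theorem mem_preimA {S : Finset (QA m k)} {v : List Bool} {q : QA m k} :
    q ∈ preimA m k S v ↔ actA m k q v ∈ S := by
  unfold preimA
  rw [mem_filter]
  exact and_iff_right (mem_univ q)

theorem mem_preimA_singleton {T : Finset (QA m k)} {x : Bool} {q : QA m k} :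
    q ∈ preimA m k T [x] ↔ deltaA m k q x ∈ T :=
  mem_preimA

theorem preimA_nil (S : Finset (QA m k)) : preimA m k S [] = S := by
  ext q
  rw [mem_preimA]
  rfl

theorem preimA_cons (S : Finset (QA m k)) (x : Bool) (v : List Bool) :
    preimA m k S (x :: v) = preimA m k (preimA m k S v) [x] := by
  ext q
  simp only [mem_preimA]
  rfl

end Preimage

namespace ExtensionCounterexample

variable {m : ℕ}

theorem mem_preimA_false_inl {T : Finset (QA m 1)} {i : Fin (m + 1)} :
    .inl i ∈ preimA m 1 T [false] ↔ .inl (i + 1) ∈ T :=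
  mem_preimA_singleton

theorem mem_preimA_false_inr {T : Finset (QA m 1)} {j : Fin 1} :
    .inr j ∈ preimA m 1 T [false] ↔ .inl 2 ∈ T :=
  mem_preimA_singleton

theorem deltaA_inl_true (i : Fin (m + 1)) :
    deltaA m 1 (.inl i) true = if i = 0 then .inr 0 else .inl i := by
  simp [deltaA]

theorem deltaA_inr_true (j : Fin 1) : deltaA m 1 (.inr j) true = .inl 0 := by
  simp [deltaA, Fin.fin_one_eq_zero j]

theorem deltaA_true_deltaA_true (q : QA m 1) : deltaA m 1 (deltaA m 1 q true) true = q := by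
  rcases q with i | j
  · by_cases hi : i = 0 <;> simp [deltaA_inl_true, deltaA_inr_true, hi]
  · simp [deltaA_inr_true, deltaA_inl_true, Fin.fin_one_eq_zero j]

theorem preimA_true (T : Finset (QA m 1)) :
    preimA m 1 T [true] = T.image (deltaA m 1 · true) := by
  ext q
  rw [mem_preimA_singleton, mem_image]
  constructor
  · exact fun h => ⟨_, h, deltaA_true_deltaA_true q⟩
  · rintro ⟨p, hp, rfl⟩
    rwa [deltaA_true_deltaA_true p]

theorem fin_val_one (hm : 2 ≤ m) : (1 : Fin (m + 1)).val = 1 :=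
  Nat.mod_eq_of_lt (by omega : 1 < m + 1)

theorem fin_val_two (hm : 2 ≤ m) : (2 : Fin (m + 1)).val = 2 :=
  Nat.mod_eq_of_lt (by omega : 2 < m + 1)

/-- The number of letters `a` taking `q₂` to `qᵢ`. -/
def aDist (i : Fin (m + 1)) : ℕ := (i - 2 : Fin (m + 1)).val

theorem aDist_le (i : Fin (m + 1)) : aDist i ≤ m :=
  Nat.lt_succ_iff.mp (i - 2).isLt

theorem aDist_two : aDist (2 : Fin (m + 1)) = 0 := by
  simp [aDist]

theorem aDist_sub_one_add_one {i : Fin (m + 1)} (hi : i ≠ 2) : aDist (i - 1) + 1 = aDist i := by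
  have hi' : i - 2 ≠ 0 := sub_ne_zero.mpr hi
  have hpos : 0 < (i - 2).val := Nat.pos_of_ne_zero (Fin.val_ne_iff.mpr hi')
  rw [aDist, aDist, sub_right_comm, Fin.coe_sub_one, if_neg hi']
  omega

theorem aDist_add_one_of_val_lt_two (hm : 2 ≤ m) {i : Fin (m + 1)} (hi : i.val < 2) :
    aDist i + 1 = i.val + m := by
  have := Fin.coe_sub_iff_lt.mpr (Fin.lt_def.mpr (fin_val_two hm ▸ hi))
  rw [aDist, this, fin_val_two hm]
  omega

/-- The subsets of `A(m,1)` with at most two states; `s` stands for `s₁`. -/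
inductive Shape (m : ℕ)
  | empty
  | s
  | q (i : Fin (m + 1))
  | qs (i : Fin (m + 1))
  | qq (i j : Fin (m + 1)) (hij : i ≠ j)

namespace Shape

def toFinset : Shape m → Finset (QA m 1)
  | empty => ∅
  | s => {.inr 0}
  | q i => {.inl i}
  | qs i => {.inl i, .inr 0}
  | qq i j _ => {.inl i, .inl j}

theorem card_toFinset_le_two (sh : Shape m) : sh.toFinset.card ≤ 2 := by
  cases sh with
  | qs _ | qq _ _ _ => exact (card_insert_le _ _).trans (by simp)
  | _ => simp [toFinset]

def stepB : Shape m → Shape m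
  | empty => empty
  | s => q 0
  | q i => if i = 0 then s else q i
  | qs i => if hi : i = 0 then qs 0 else qq i 0 hi
  | qq i j hij => if i = 0 then qs j else if j = 0 then qs i else qq i j hij

theorem toFinset_stepB (sh : Shape m) :
    sh.stepB.toFinset = preimA m 1 sh.toFinset [true] := by
  rw [preimA_true]
  cases sh with
  | empty => rfl
  | s => simp [stepB, toFinset, deltaA_inr_true]
  | q i => by_cases hi : i = 0 <;> simp [stepB, toFinset, deltaA_inl_true, hi]
  | qs i =>
    by_cases hi : i = 0 <;>
      simp [stepB, toFinset, deltaA_inl_true, deltaA_inr_true, hi, pair_comm]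
  | qq i j hij =>
    by_cases hi : i = 0
    · subst hi
      simp [stepB, toFinset, deltaA_inl_true, hij.symm, pair_comm]
    by_cases hj : j = 0
    · subst hj
      simp [stepB, toFinset, deltaA_inl_true, hi, pair_comm]
    · simp [stepB, toFinset, deltaA_inl_true, hi, hj]

/-- `none` when the preimage under `a` has three states. -/
def stepA : Shape m → Option (Shape m)
  | empty | s => some empty
  | q i | qs i => some (if i = 2 then qs (i - 1) else q (i - 1))
  | qq i j hij =>
    if i = 2 ∨ j = 2 then none else some (qq (i - 1) (j - 1) (sub_left_injective.ne hij))

theorem toFinset_stepA {sh sh' : Shape m} (h : sh.stepA = some sh') :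
    sh'.toFinset = preimA m 1 sh.toFinset [false] := by
  cases sh with
  | empty | s =>
    obtain rfl := Option.some.inj h
    ext (i | j) <;> simp [toFinset, mem_preimA_false_inl, mem_preimA_false_inr]
  | q t | qs t =>
    obtain rfl := Option.some.inj h
    split_ifs with ht
    all_goals ext (i | j) <;> simp [toFinset, mem_preimA_false_inl, mem_preimA_false_inr,
      eq_sub_iff_add_eq, Fin.fin_one_eq_zero, eq_comm (a := (2 : Fin (m + 1))), ht]
  | qq t u htu =>
    simp only [stepA] at h
    split_ifs at h with ht
    obtain rfl := Option.some.inj h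
    push Not at ht
    ext (i | j) <;> simp [toFinset, mem_preimA_false_inl, mem_preimA_false_inr,
      eq_sub_iff_add_eq, ht.1.symm, ht.2.symm]

def cost : Shape m → ℕ
  | empty | s => 2 * m + 2
  | q i => aDist i + m + 2
  | qs i => if i = 0 then 2 * m + 1 else aDist i + 1
  | qq i j _ => min (aDist i) (aDist j) + 1

theorem cost_le_cost_stepB (hm : 2 ≤ m) (sh : Shape m) : sh.cost ≤ sh.stepB.cost + 1 := by
  have h0 := aDist_add_one_of_val_lt_two hm (i := 0) (by simp)
  rw [Fin.val_zero] at h0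
  cases sh with
  | empty | s => simp only [stepB, cost]; omega
  | q i =>
    have := aDist_le i
    simp only [stepB]
    split_ifs <;> simp only [cost] <;> omega
  | qs i =>
    have := aDist_le i
    simp only [stepB]
    split_ifs with hi <;> simp only [cost, hi, ↓reduceIte] <;> omega
  | qq i j hij =>
    simp only [stepB]
    split_ifs with hi hj
    · subst hi
      simp only [cost, hij.symm, ↓reduceIte]
      omega
    · subst hj
      simp only [cost, hi, ↓reduceIte]
      omega
    · simp only [cost]
      omega

theorem cost_le_cost_stepA (hm : 2 ≤ m) {sh sh' : Shape m} (h : sh.stepA = some sh') :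
    sh.cost ≤ sh'.cost + 1 := by
  have h0 := aDist_add_one_of_val_lt_two hm (i := 0) (by simp)
  have h1 := aDist_add_one_of_val_lt_two hm (i := 1) (by rw [fin_val_one hm]; omega)
  rw [Fin.val_zero] at h0
  rw [fin_val_one hm] at h1
  have h21 : (2 : Fin (m + 1)) - 1 = 1 := Fin.ext <| by
    rw [Fin.coe_sub_iff_le.mpr (Fin.le_def.mpr (by rw [fin_val_one hm, fin_val_two hm]; omega)),
      fin_val_one hm, fin_val_two hm]
  have h10 : (1 : Fin (m + 1)) ≠ 0 := Fin.ne_of_val_ne (by rw [fin_val_one hm]; simp)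
  have h20 : (2 : Fin (m + 1)) ≠ 0 := Fin.ne_of_val_ne (by rw [fin_val_two hm]; simp)
  cases sh with
  | empty | s =>
    obtain rfl := Option.some.inj h
    simp only [cost]
    omega
  | q t =>
    obtain rfl := Option.some.inj h
    split_ifs with ht
    · subst ht
      simp only [cost, h21, h10, aDist_two, ↓reduceIte]
      omega
    · have := aDist_sub_one_add_one ht
      simp only [cost]
      omega
  | qs t =>
    obtain rfl := Option.some.inj h
    split_ifs with ht
    · subst ht
      simp only [cost, h21, h10, h20, aDist_two, ↓reduceIte]
      omega
    · have := aDist_sub_one_add_one ht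
      simp only [cost]
      split_ifs with ht0
      · subst ht0
        omega
      · have := aDist_le t
        omega
  | qq t u htu =>
    simp only [stepA] at h
    split_ifs at h with ht
    obtain rfl := Option.some.inj h
    push Not at ht
    have := aDist_sub_one_add_one ht.1
    have := aDist_sub_one_add_one ht.2
    simp only [cost]
    omega

theorem cost_le_one_of_stepA_eq_none {sh : Shape m} (h : sh.stepA = none) : sh.cost ≤ 1 := by
  cases sh with
  | qq i j hij =>
    simp only [stepA, ite_eq_left_iff, reduceCtorEq, imp_false, not_not] at h
    rcases h with rfl | rfl <;> simp [cost, aDist_two]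
  | _ => simp [stepA] at h

end Shape

theorem exists_shape_preimA (hm : 2 ≤ m) (v : List Bool) (hv : v.length < 2 * m + 1) :
    ∃ sh : Shape m,
      preimA m 1 {.inl 0, .inr 0} v = sh.toFinset ∧ 2 * m + 1 ≤ sh.cost + v.length := by
  induction v with
  | nil => exact ⟨.qs 0, preimA_nil _, by simp [Shape.cost]⟩
  | cons x v ih =>
    rw [List.length_cons] at hv
    obtain ⟨sh, hsh, hcost⟩ := ih (by omega)
    rw [preimA_cons, hsh, List.length_cons]
    cases x with
    | true =>
      have := sh.cost_le_cost_stepB hm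
      exact ⟨sh.stepB, sh.toFinset_stepB.symm, by omega⟩
    | false =>
      cases h : sh.stepA with
      | none =>
        have := Shape.cost_le_one_of_stepA_eq_none h
        omega
      | some sh' =>
        have := Shape.cost_le_cost_stepA hm h
        exact ⟨sh', (Shape.toFinset_stepA h).symm, by omega⟩

theorem card_preimA_le_two (hm : 2 ≤ m) {v : List Bool} (hv : v.length < 2 * m + 1) :
    (preimA m 1 {.inl 0, .inr 0} v).card ≤ 2 := by
  obtain ⟨sh, hsh, -⟩ := exists_shape_preimA hm v hv
  exact hsh ▸ sh.card_toFinset_le_two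

end ExtensionCounterexample

theorem stmt5 (n : ℕ) (hn : 3 < n) :
    ∀ v : List Bool,
      (({Sum.inl 0, Sum.inr 0} : Finset (QA (n - 2) 1)).card <
        (preimA (n - 2) 1 {Sum.inl 0, Sum.inr 0} v).card) →
      2 * n - 3 ≤ v.length := by
  intro v hcard
  by_contra! hv
  have hS : ({Sum.inl 0, Sum.inr 0} : Finset (QA (n - 2) 1)).card = 2 := card_pair (by simp)
  have := ExtensionCounterexample.card_preimA_le_two (m := n - 2) (by omega) (v := v) (by omega)
  omega
end

section
/- For the automaton B_n = A(n-2, 1) with n > 3, the shortest word v extending the subset S = {q₀, s₁} is exactly v = a^{n-2} b a^{n-2}, of length 2n - 3; consequently, for every constant c < 2 and every n > 3/(2-c), the subset S is not cn-Extendable, disproving the cn-Extension conjecture for all c < 2. -/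
/-!
Read words from the right: `S·(w x)⁻¹ = (S·x⁻¹)·w⁻¹`. Think of a set `U` of states as tokens.
Under `a⁻¹` a token at `qⱼ` moves to `qⱼ₋₁`, a token at `q₂` also spawns one at `s₁`, and a token
at `s₁` dies; under `b⁻¹` the tokens at `q₀` and `s₁` swap. Sets of at most two states carry an
explicit `potential`, which no letter lowers by more than one and only `forcedLetter U` lowers at
all. So a word producing three tokens from `U` has length at least `potential U`, and a word of
exactly that length is unique, its letters being forced from right to left. For `S = {q₀, s₁}`
in `A(m, 1)` the potential is `2m + 1`, attained by `aᵐ b aᵐ`, which sends `q₁`, `q₂` and `s₁`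
to `q₀`.
-/

namespace AutomatonB

theorem actA_append {m k : ℕ} (q : QA m k) (v w : List Bool) :
    actA m k q (v ++ w) = actA m k (actA m k q v) w :=
  List.foldl_append

theorem actA_singleton {m k : ℕ} (q : QA m k) (x : Bool) : actA m k q [x] = deltaA m k q x :=
  rfl

theorem mem_preimA {m k : ℕ} {U : Finset (QA m k)} {q : QA m k} {w : List Bool} :
    q ∈ preimA m k U w ↔ actA m k q w ∈ U := by
  rw [preimA, Finset.mem_filter, and_iff_right (Finset.mem_univ q)]

theorem preimA_nil {m k : ℕ} (U : Finset (QA m k)) : preimA m k U [] = U := by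
  ext q
  rw [mem_preimA]
  rfl

theorem preimA_append {m k : ℕ} (U : Finset (QA m k)) (v w : List Bool) :
    preimA m k U (v ++ w) = preimA m k (preimA m k U w) v := by
  ext q
  simp only [mem_preimA, actA_append]

theorem mem_preimA_singleton {m k : ℕ} {U : Finset (QA m k)} {q : QA m k} {x : Bool} :
    q ∈ preimA m k U [x] ↔ deltaA m k q x ∈ U := by
  rw [mem_preimA, actA_singleton]

open scoped Fin.NatCast in
theorem actA_inl_replicate_a {m k : ℕ} (i : Fin (m + 1)) (j : ℕ) :
    actA m k (Sum.inl i) (List.replicate j false) = Sum.inl (i + j) := by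
  induction j with
  | zero => simp [actA]
  | succ j ih => rw [List.replicate_succ', actA_append, ih, Nat.cast_succ, ← add_assoc]; rfl

open scoped Fin.NatCast in
theorem actA_inl_replicate_a_eq_zero {m k : ℕ} {i : Fin (m + 1)} {j : ℕ}
    (h : (i : ℕ) + j = m + 1) : actA m k (Sum.inl i) (List.replicate j false) = Sum.inl 0 := by
  have hcast : ((i + j : ℕ) : Fin (m + 1)) = 0 := by rw [h]; exact Fin.natCast_self _
  rw [actA_inl_replicate_a, Sum.inl.injEq]
  simpa using hcast

section OneExtraState

variable {m : ℕ}

theorem card_eq_card_toLeft_add (U : Finset (QA m 1)) :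
    U.card = U.toLeft.card + if Sum.inr 0 ∈ U then 1 else 0 := by
  rw [← Finset.card_toLeft_add_card_toRight]
  congr 1
  split_ifs with h
  · exact Finset.card_eq_one.2 ⟨0, by ext j; simp [Subsingleton.elim j 0, h]⟩
  · exact Finset.card_eq_zero.2 (by ext j; simp [Subsingleton.elim j 0, h])

theorem toLeft_preimA_a (U : Finset (QA m 1)) :
    (preimA m 1 U [false]).toLeft = U.toLeft.image (· - 1) := by
  ext i
  simp only [Finset.mem_toLeft, mem_preimA_singleton, deltaA, Finset.mem_image]
  exact ⟨fun h => ⟨i + 1, h, add_sub_cancel_right i 1⟩, by rintro ⟨j, hj, rfl⟩; simpa using hj⟩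

theorem inr_mem_preimA_a (U : Finset (QA m 1)) :
    Sum.inr 0 ∈ preimA m 1 U [false] ↔ 2 ∈ U.toLeft := by
  simp [mem_preimA_singleton, deltaA]

theorem toLeft_preimA_b (U : Finset (QA m 1)) :
    (preimA m 1 U [true]).toLeft =
      if Sum.inr 0 ∈ U then insert 0 (U.toLeft.erase 0) else U.toLeft.erase 0 := by
  ext i
  by_cases hi : i = 0 <;> split_ifs <;> simp_all [mem_preimA_singleton, deltaA]

theorem inr_mem_preimA_b (U : Finset (QA m 1)) :
    Sum.inr 0 ∈ preimA m 1 U [true] ↔ 0 ∈ U.toLeft := by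
  simp [mem_preimA_singleton, deltaA]

theorem preimA_b_eq_self {U : Finset (QA m 1)} (h : Sum.inl 0 ∈ U ↔ Sum.inr 0 ∈ U) :
    preimA m 1 U [true] = U := by
  ext (i | j)
  · by_cases hi : i = 0 <;> simp_all [mem_preimA_singleton, deltaA]
  · simp [mem_preimA_singleton, deltaA, Subsingleton.elim j 0, h]

theorem val_one_of_two_le (hm : 2 ≤ m) : ((1 : Fin (m + 1)) : ℕ) = 1 := by
  simpa using Nat.mod_eq_of_lt (show 1 < m + 1 by omega)

theorem val_two_of_two_le (hm : 2 ≤ m) : ((2 : Fin (m + 1)) : ℕ) = 2 := by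
  simpa using Nat.mod_eq_of_lt (show 2 < m + 1 by omega)

theorem two_ne_zero_of_two_le (hm : 2 ≤ m) : (2 : Fin (m + 1)) ≠ 0 := by
  rw [Ne, Fin.ext_iff, val_two_of_two_le hm, Fin.val_zero]; omega

theorem one_ne_zero_of_two_le (hm : 2 ≤ m) : (1 : Fin (m + 1)) ≠ 0 := by
  rw [Ne, Fin.ext_iff, val_one_of_two_le hm, Fin.val_zero]; omega

theorem two_sub_one (hm : 2 ≤ m) : (2 : Fin (m + 1)) - 1 = 1 := by
  rw [Fin.ext_iff, Fin.coe_sub_one, if_neg (two_ne_zero_of_two_le hm), val_two_of_two_le hm,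
    val_one_of_two_le hm]

/-- The number of letters `a` that move a token at `qⱼ` to `q₂`. -/
def stepsToTwo (m : ℕ) (j : Fin (m + 1)) : ℕ :=
  if 2 ≤ (j : ℕ) then j - 2 else j + m - 1

theorem stepsToTwo_zero : stepsToTwo m 0 = m - 1 := by
  simp [stepsToTwo]

theorem stepsToTwo_one (hm : 2 ≤ m) : stepsToTwo m 1 = m := by
  rw [stepsToTwo, val_one_of_two_le hm, if_neg (by omega)]; omega

theorem stepsToTwo_two (hm : 2 ≤ m) : stepsToTwo m 2 = 0 := by
  rw [stepsToTwo, val_two_of_two_le hm]; rfl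

theorem stepsToTwo_sub_one (hm : 2 ≤ m) {j : Fin (m + 1)} (hj : j ≠ 2) :
    stepsToTwo m (j - 1) + 1 = stepsToTwo m j := by
  have hj' : (j : ℕ) ≠ 2 := by rwa [Ne, Fin.ext_iff, val_two_of_two_le hm] at hj
  have := j.is_le
  simp only [stepsToTwo, Fin.coe_sub_one, Fin.ext_iff, Fin.val_zero]
  split_ifs <;> omega

/-- For nonempty `U` with at most two states, the length of a shortest word `w` with
`3 ≤ #(U·w⁻¹)`: a token at `qⱼ` needs `stepsToTwo m j` letters `a` to reach `q₂`, where one more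
`a` spawns a token at `s₁`. The empty set shares the value `2m + 2` of `{s₁}`. -/
def potential (m : ℕ) (U : Finset (QA m 1)) : ℕ :=
  if 3 ≤ U.card then 0
  else if h : U.toLeft.Nonempty then
    if 2 ≤ U.toLeft.card then 1 + U.toLeft.inf' h (stepsToTwo m)
    else if Sum.inr 0 ∈ U then
      if 0 ∈ U.toLeft then 2 * m + 1 else 2 + min (m - 1) (U.toLeft.inf' h (stepsToTwo m))
    else m + 2 + U.toLeft.inf' h (stepsToTwo m)
  else 2 * m + 2

variable {U : Finset (QA m 1)}

theorem potential_of_three_le_card (h : 3 ≤ U.card) : potential m U = 0 := by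
  rw [potential, if_pos h]

theorem potential_of_toLeft_eq_empty (h : U.toLeft = ∅) : potential m U = 2 * m + 2 := by
  have hc : U.card ≤ 1 := by rw [card_eq_card_toLeft_add, h]; split <;> simp
  rw [potential, if_neg (by omega), dif_neg (by simp [h])]

theorem potential_of_toLeft_eq_singleton {j : Fin (m + 1)} (h : U.toLeft = {j})
    (hs : Sum.inr 0 ∉ U) : potential m U = m + 2 + stepsToTwo m j := by
  have hc : U.card = 1 := by rw [card_eq_card_toLeft_add, h]; simp [hs]
  rw [potential, if_neg (by omega), dif_pos (by simp [h]), if_neg (by simp [h]), if_neg hs]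
  simp [h]

theorem potential_of_toLeft_eq_zero_of_inr_mem (h : U.toLeft = {0}) (hs : Sum.inr 0 ∈ U) :
    potential m U = 2 * m + 1 := by
  have hc : U.card = 2 := by rw [card_eq_card_toLeft_add, h]; simp [hs]
  rw [potential, if_neg (by omega), dif_pos (by simp [h]), if_neg (by simp [h]), if_pos hs,
    if_pos (by simp [h])]

theorem potential_of_toLeft_eq_singleton_of_inr_mem {j : Fin (m + 1)} (h : U.toLeft = {j})
    (hj : j ≠ 0) (hs : Sum.inr 0 ∈ U) :
    potential m U = 2 + min (m - 1) (stepsToTwo m j) := by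
  have hc : U.card = 2 := by rw [card_eq_card_toLeft_add, h]; simp [hs]
  rw [potential, if_neg (by omega), dif_pos (by simp [h]), if_neg (by simp [h]), if_pos hs,
    if_neg (by simp [h, Ne.symm hj])]
  simp [h]

theorem potential_of_toLeft_eq_pair {i j : Fin (m + 1)} (hij : i ≠ j) (h : U.toLeft = {i, j})
    (hs : Sum.inr 0 ∉ U) : potential m U = 1 + min (stepsToTwo m i) (stepsToTwo m j) := by
  have hcl : U.toLeft.card = 2 := by rw [h, Finset.card_pair hij]
  have hc : U.card = 2 := by rw [card_eq_card_toLeft_add, hcl]; simp [hs]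
  rw [potential, if_neg (by omega), dif_pos (by simp [h]), if_pos hcl.ge]
  simp [h]

def forcedLetter (U : Finset (QA m 1)) : Bool := decide (Sum.inr 0 ∈ U ∧ Sum.inl 0 ∉ U)

theorem potential_le_preimA_of_toLeft_eq_empty (h : U.toLeft = ∅) (x : Bool) :
    potential m U ≤
      potential m (preimA m 1 U [x]) + if x = forcedLetter U then 1 else 0 := by
  rw [potential_of_toLeft_eq_empty h]
  by_cases hb : x = true ∧ Sum.inr 0 ∈ U
  · obtain ⟨rfl, hs⟩ := hb
    have h' : (preimA m 1 U [true]).toLeft = {0} := by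
      rw [toLeft_preimA_b, if_pos hs, h]; rfl
    have hs' : Sum.inr 0 ∉ preimA m 1 U [true] := by simp [inr_mem_preimA_b, h]
    have hf : forcedLetter U = true := by simp [forcedLetter, hs, ← Finset.mem_toLeft, h]
    rw [potential_of_toLeft_eq_singleton h' hs', stepsToTwo_zero, hf, if_pos rfl]
    omega
  · have h' : (preimA m 1 U [x]).toLeft = ∅ := by
      cases x
      · rw [toLeft_preimA_a, h, Finset.image_empty]
      · rw [toLeft_preimA_b, if_neg (by tauto), h, Finset.erase_empty]
    rw [potential_of_toLeft_eq_empty h']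
    omega

theorem potential_le_preimA_of_toLeft_eq_singleton (hm : 2 ≤ m) {j : Fin (m + 1)}
    (h : U.toLeft = {j}) (hs : Sum.inr 0 ∉ U) (x : Bool) :
    potential m U ≤
      potential m (preimA m 1 U [x]) + if x = forcedLetter U then 1 else 0 := by
  have hf : forcedLetter U = false := by simp [forcedLetter, hs]
  rw [potential_of_toLeft_eq_singleton h hs, hf]
  cases x <;> simp only [Bool.true_eq_false, if_true, if_false, add_zero]
  · have h' : (preimA m 1 U [false]).toLeft = {j - 1} := by
      rw [toLeft_preimA_a, h, Finset.image_singleton]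
    by_cases hj : j = 2
    · subst hj
      have hs' : Sum.inr 0 ∈ preimA m 1 U [false] := by simp [inr_mem_preimA_a, h]
      rw [two_sub_one hm] at h'
      rw [potential_of_toLeft_eq_singleton_of_inr_mem h' (one_ne_zero_of_two_le hm) hs',
        stepsToTwo_one hm, stepsToTwo_two hm]
      omega
    · have hs' : Sum.inr 0 ∉ preimA m 1 U [false] := by
        simpa [inr_mem_preimA_a, h, eq_comm] using hj
      rw [potential_of_toLeft_eq_singleton h' hs', ← stepsToTwo_sub_one hm hj]
      omega
  · by_cases hj : j = 0
    · subst hj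
      have h' : (preimA m 1 U [true]).toLeft = ∅ := by
        rw [toLeft_preimA_b, if_neg hs, h, Finset.erase_singleton]
      rw [potential_of_toLeft_eq_empty h', stepsToTwo_zero]
      omega
    · have hq : Sum.inl 0 ∉ U := by simpa [← Finset.mem_toLeft, h, eq_comm] using hj
      rw [preimA_b_eq_self (iff_of_false hq hs), potential_of_toLeft_eq_singleton h hs]

theorem potential_le_preimA_of_toLeft_eq_zero_of_inr_mem (hm : 2 ≤ m) (h : U.toLeft = {0})
    (hs : Sum.inr 0 ∈ U) (x : Bool) :
    potential m U ≤
      potential m (preimA m 1 U [x]) + if x = forcedLetter U then 1 else 0 := by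
  have hq : Sum.inl 0 ∈ U := by simp [← Finset.mem_toLeft, h]
  have hf : forcedLetter U = false := by simp [forcedLetter, hq]
  rw [potential_of_toLeft_eq_zero_of_inr_mem h hs, hf]
  cases x <;> simp only [Bool.true_eq_false, if_true, if_false, add_zero]
  · have h' : (preimA m 1 U [false]).toLeft = {0 - 1} := by
      rw [toLeft_preimA_a, h, Finset.image_singleton]
    have hs' : Sum.inr 0 ∉ preimA m 1 U [false] := by
      simpa [inr_mem_preimA_a, h] using two_ne_zero_of_two_le hm
    rw [potential_of_toLeft_eq_singleton h' hs']
    have := stepsToTwo_sub_one hm (two_ne_zero_of_two_le hm).symm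
    rw [stepsToTwo_zero] at this
    omega
  · rw [preimA_b_eq_self (iff_of_true hq hs), potential_of_toLeft_eq_zero_of_inr_mem h hs]

theorem potential_le_preimA_of_toLeft_eq_singleton_of_inr_mem (hm : 2 ≤ m) {j : Fin (m + 1)}
    (h : U.toLeft = {j}) (hj : j ≠ 0) (hs : Sum.inr 0 ∈ U) (x : Bool) :
    potential m U ≤
      potential m (preimA m 1 U [x]) + if x = forcedLetter U then 1 else 0 := by
  have hq : Sum.inl 0 ∉ U := by
    rw [← Finset.mem_toLeft, h, Finset.mem_singleton]; exact Ne.symm hj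
  have hf : forcedLetter U = true := by simp [forcedLetter, hs, hq]
  rw [potential_of_toLeft_eq_singleton_of_inr_mem h hj hs, hf]
  cases x <;> simp only [Bool.false_eq_true, if_true, if_false, add_zero]
  · have h' : (preimA m 1 U [false]).toLeft = {j - 1} := by
      rw [toLeft_preimA_a, h, Finset.image_singleton]
    by_cases hj2 : j = 2
    · subst hj2
      have hs' : Sum.inr 0 ∈ preimA m 1 U [false] := by simp [inr_mem_preimA_a, h]
      rw [two_sub_one hm] at h'
      rw [potential_of_toLeft_eq_singleton_of_inr_mem h' (one_ne_zero_of_two_le hm) hs',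
        stepsToTwo_one hm]
      omega
    · have hs' : Sum.inr 0 ∉ preimA m 1 U [false] := by
        simpa [inr_mem_preimA_a, h, eq_comm] using hj2
      rw [potential_of_toLeft_eq_singleton h' hs', ← stepsToTwo_sub_one hm hj2]
      omega
  · have h' : (preimA m 1 U [true]).toLeft = {0, j} := by
      rw [toLeft_preimA_b, if_pos hs, h, Finset.erase_eq_of_notMem (by simpa [eq_comm] using hj)]
    have hs' : Sum.inr 0 ∉ preimA m 1 U [true] := by
      simpa [inr_mem_preimA_b, h, eq_comm] using hj
    rw [potential_of_toLeft_eq_pair (Ne.symm hj) h' hs', stepsToTwo_zero]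
    omega

theorem potential_le_preimA_of_toLeft_eq_pair (hm : 2 ≤ m) {i j : Fin (m + 1)} (hij : i ≠ j)
    (h : U.toLeft = {i, j}) (hs : Sum.inr 0 ∉ U) (x : Bool) :
    potential m U ≤
      potential m (preimA m 1 U [x]) + if x = forcedLetter U then 1 else 0 := by
  have hf : forcedLetter U = false := by simp [forcedLetter, hs]
  rw [potential_of_toLeft_eq_pair hij h hs, hf]
  cases x <;> simp only [Bool.true_eq_false, if_true, if_false, add_zero]
  · have h' : (preimA m 1 U [false]).toLeft = {i - 1, j - 1} := by
      rw [toLeft_preimA_a, h, Finset.image_insert, Finset.image_singleton]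
    have hij' : i - 1 ≠ j - 1 := fun e => hij (sub_left_injective e)
    by_cases h2 : (2 : Fin (m + 1)) ∈ U.toLeft
    · have hs' : Sum.inr 0 ∈ preimA m 1 U [false] := (inr_mem_preimA_a U).2 h2
      have h3 : 3 ≤ (preimA m 1 U [false]).card := by
        rw [card_eq_card_toLeft_add, h', Finset.card_pair hij', if_pos hs']
      rw [h, Finset.mem_insert, Finset.mem_singleton] at h2
      rw [potential_of_three_le_card h3]
      rcases h2 with rfl | rfl <;> simp [stepsToTwo_two hm]
    · rw [h, Finset.mem_insert, Finset.mem_singleton, not_or] at h2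
      have hs' : Sum.inr 0 ∉ preimA m 1 U [false] := by
        rwa [inr_mem_preimA_a, h, Finset.mem_insert, Finset.mem_singleton, not_or]
      rw [potential_of_toLeft_eq_pair hij' h' hs', ← stepsToTwo_sub_one hm (Ne.symm h2.1),
        ← stepsToTwo_sub_one hm (Ne.symm h2.2)]
      omega
  · by_cases h0 : (0 : Fin (m + 1)) ∈ U.toLeft
    · have hs' : Sum.inr 0 ∈ preimA m 1 U [true] := (inr_mem_preimA_b U).2 h0
      rw [h, Finset.mem_insert, Finset.mem_singleton] at h0
      rcases h0 with rfl | rfl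
      · have h' : (preimA m 1 U [true]).toLeft = {j} := by
          rw [toLeft_preimA_b, if_neg hs, h, Finset.erase_insert (by simpa using hij)]
        rw [potential_of_toLeft_eq_singleton_of_inr_mem h' hij.symm hs', stepsToTwo_zero]
        omega
      · have h' : (preimA m 1 U [true]).toLeft = {i} := by
          rw [toLeft_preimA_b, if_neg hs, h, Finset.pair_comm,
            Finset.erase_insert (by simpa using hij.symm)]
        rw [potential_of_toLeft_eq_singleton_of_inr_mem h' hij hs', stepsToTwo_zero]
        omega
    · rw [preimA_b_eq_self (iff_of_false (by simpa using h0) hs),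
        potential_of_toLeft_eq_pair hij h hs]

theorem potential_le_preimA (hm : 2 ≤ m) (U : Finset (QA m 1)) (x : Bool) :
    potential m U ≤
      potential m (preimA m 1 U [x]) + if x = forcedLetter U then 1 else 0 := by
  by_cases h3 : 3 ≤ U.card
  · rw [potential_of_three_le_card h3]
    omega
  have hcard := card_eq_card_toLeft_add U
  have hle : U.toLeft.card ≤ 2 := by split at hcard <;> omega
  interval_cases hl : U.toLeft.card
  · exact potential_le_preimA_of_toLeft_eq_empty (Finset.card_eq_zero.1 hl) x
  · obtain ⟨j, h⟩ := Finset.card_eq_one.1 hl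
    by_cases hs : Sum.inr 0 ∈ U
    · by_cases hj : j = 0
      · subst hj
        exact potential_le_preimA_of_toLeft_eq_zero_of_inr_mem hm h hs x
      · exact potential_le_preimA_of_toLeft_eq_singleton_of_inr_mem hm h hj hs x
    · exact potential_le_preimA_of_toLeft_eq_singleton hm h hs x
  · obtain ⟨i, j, hij, h⟩ := Finset.card_eq_two.1 hl
    have hs : Sum.inr 0 ∉ U := fun hs => by
      rw [if_pos hs] at hcard
      omega
    exact potential_le_preimA_of_toLeft_eq_pair hm hij h hs x

theorem potential_le_length (hm : 2 ≤ m) {v : List Bool} :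
    ∀ {U : Finset (QA m 1)}, 3 ≤ (preimA m 1 U v).card → potential m U ≤ v.length := by
  induction v using List.reverseRecOn with
  | nil =>
    intro U h
    rw [preimA_nil] at h
    rw [potential_of_three_le_card h]
    rfl
  | append_singleton w x ih =>
    intro U h
    rw [preimA_append] at h
    have hw := ih h
    have hx := potential_le_preimA hm U x
    rw [List.length_append, List.length_singleton]
    split_ifs at hx <;> omega

theorem forcedLetter_of_length_eq_potential (hm : 2 ≤ m) {w : List Bool} {x : Bool}
    (h : 3 ≤ (preimA m 1 U (w ++ [x])).card) (hlen : (w ++ [x]).length = potential m U) :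
    x = forcedLetter U ∧ w.length = potential m (preimA m 1 U [x]) := by
  rw [preimA_append] at h
  have hw := potential_le_length hm h
  have hx := potential_le_preimA hm U x
  rw [List.length_append, List.length_singleton] at hlen
  split_ifs at hx with hforced
  · exact ⟨hforced, by omega⟩
  · omega

theorem eq_of_length_eq_potential (hm : 2 ≤ m) {v : List Bool} :
    ∀ {U : Finset (QA m 1)} {w : List Bool}, 3 ≤ (preimA m 1 U v).card →
      3 ≤ (preimA m 1 U w).card → v.length = potential m U → w.length = potential m U →
      v = w := by
  induction v using List.reverseRecOn with
  | nil =>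
    intro U w _ _ hv hw
    exact (List.length_eq_zero_iff.1 (hw.trans hv.symm)).symm
  | append_singleton v x ih =>
    intro U w hv hw hvl hwl
    obtain rfl | ⟨w, y, rfl⟩ := List.eq_nil_or_concat' w
    · simp only [List.length_append, List.length_singleton, List.length_nil] at hvl hwl
      omega
    obtain ⟨hx, hvl'⟩ := forcedLetter_of_length_eq_potential hm hv hvl
    obtain ⟨hy, hwl'⟩ := forcedLetter_of_length_eq_potential hm hw hwl
    obtain rfl : x = y := hx.trans hy.symm
    rw [preimA_append] at hv hw
    rw [ih hv hw hvl' hwl']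

def extensionWord (m : ℕ) : List Bool :=
  List.replicate m false ++ [true] ++ List.replicate m false

theorem three_le_card_preimA_extensionWord (hm : 2 ≤ m) :
    3 ≤ (preimA m 1 {Sum.inl 0, Sum.inr 0} (extensionWord m)).card := by
  have hm1 : List.replicate m false = false :: List.replicate (m - 1) false := by
    rw [← List.replicate_succ, Nat.sub_add_cancel (by omega)]
  have hq1 : actA m 1 (Sum.inl 1) (List.replicate m false) = Sum.inl 0 :=
    actA_inl_replicate_a_eq_zero (by rw [val_one_of_two_le hm]; omega)
  have hs : actA m 1 (Sum.inr 0) (List.replicate m false) = Sum.inl 0 := by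
    rw [hm1]
    exact actA_inl_replicate_a_eq_zero (by rw [val_two_of_two_le hm]; omega)
  have hq2 : actA m 1 (Sum.inl 2) (List.replicate m false) = Sum.inl 1 := by
    have hsplit : List.replicate m false = List.replicate (m - 1) false ++ [false] := by
      rw [← List.replicate_succ', Nat.sub_add_cancel (by omega)]
    rw [hsplit, actA_append, actA_inl_replicate_a_eq_zero (by rw [val_two_of_two_le hm]; omega)]
    exact congrArg Sum.inl (zero_add 1)
  have hb0 : deltaA m 1 (Sum.inl 0) true = Sum.inr 0 := by simp [deltaA]
  have hb1 : deltaA m 1 (Sum.inl 1) true = Sum.inl 1 := by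
    simp [deltaA, one_ne_zero_of_two_le hm]
  have hsub : ({Sum.inl 1, Sum.inl 2, Sum.inr 0} : Finset (QA m 1)) ⊆
      preimA m 1 {Sum.inl 0, Sum.inr 0} (extensionWord m) := by
    intro q hq
    rw [mem_preimA]
    simp only [Finset.mem_insert, Finset.mem_singleton] at hq
    rcases hq with rfl | rfl | rfl <;>
      simp only [extensionWord, actA_append, actA_singleton, hq1, hq2, hs, hb0, hb1,
        Finset.mem_insert, Finset.mem_singleton, true_or]
  have h12 : (1 : Fin (m + 1)) ≠ 2 := by
    rw [Ne, Fin.ext_iff, val_one_of_two_le hm, val_two_of_two_le hm]; omega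
  calc 3 = ({Sum.inl 1, Sum.inl 2, Sum.inr 0} : Finset (QA m 1)).card := by simp [h12]
    _ ≤ _ := Finset.card_le_card hsub

theorem shortest_extension (hm : 2 ≤ m) {v : List Bool}
    (hv : 3 ≤ (preimA m 1 {Sum.inl 0, Sum.inr 0} v).card) :
    2 * m + 1 ≤ v.length ∧ (v.length = 2 * m + 1 → v = extensionWord m) := by
  have hpot : potential m {Sum.inl 0, Sum.inr 0} = 2 * m + 1 :=
    potential_of_toLeft_eq_zero_of_inr_mem (by ext; simp) (by simp)
  refine ⟨hpot ▸ potential_le_length hm hv, fun hlen => ?_⟩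
  refine eq_of_length_eq_potential hm hv (three_le_card_preimA_extensionWord hm) (hpot ▸ hlen) ?_
  rw [hpot, extensionWord]
  simp only [List.length_append, List.length_replicate, List.length_singleton]
  omega

end OneExtraState

end AutomatonB

theorem stmt7 (n : ℕ) (hn : 3 < n) :
    let S : Finset (QA (n - 2) 1) := {Sum.inl 0, Sum.inr 0}
    let v₀ : List Bool :=
      List.replicate (n - 2) false ++ [true] ++ List.replicate (n - 2) false
    -- v₀ extends S,
    (S.card < (preimA (n - 2) 1 S v₀).card) ∧
    v₀.length = 2 * n - 3 ∧
    -- v₀ is the unique shortest extension word for S,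
    (∀ v : List Bool, S.card < (preimA (n - 2) 1 S v).card →
      v₀.length ≤ v.length ∧ (v.length = v₀.length → v = v₀)) ∧
    -- hence S is not cn-Extendable for any c < 2 once n > 3/(2-c).
    (∀ c : ℝ, c < 2 → (3 : ℝ) / (2 - c) < (n : ℝ) →
      ¬ ∃ v : List Bool, (v.length : ℝ) ≤ c * (n : ℝ) ∧
        S.card < (preimA (n - 2) 1 S v).card) := by
  intro S v₀
  have hm : 2 ≤ n - 2 := by omega
  have hS : S.card = 2 := by simp [S]
  have hlen : v₀.length = 2 * (n - 2) + 1 := by simp [v₀]; omega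
  have hshortest : ∀ v : List Bool, S.card < (preimA (n - 2) 1 S v).card →
      v₀.length ≤ v.length ∧ (v.length = v₀.length → v = v₀) := by
    intro v hv
    have h3 : 3 ≤ (preimA (n - 2) 1 S v).card := by omega
    rw [hlen]
    exact AutomatonB.shortest_extension hm h3
  have hext : 3 ≤ (preimA (n - 2) 1 S v₀).card := AutomatonB.three_le_card_preimA_extensionWord hm
  refine ⟨by omega, by omega, hshortest, ?_⟩
  rintro c hc hn' ⟨v, hvc, hv⟩
  have hlow : (2 * n : ℝ) ≤ v.length + 3 := by
    have h := (hshortest v hv).1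
    rw [hlen] at h
    exact_mod_cast (by omega : 2 * n ≤ v.length + 3)
  rw [div_lt_iff₀ (by linarith)] at hn'
  linarith
end

section
/- If a strongly connected synchronizing n-state automaton A satisfies the (k-1)n-Balanced property (every proper subset S of Q admits words v₁,…,v_m with |vᵢ| < (k-1)n and ∑[S·vᵢ⁻¹] = m(|S|/n)[Q]), then every proper subset of Q is kn-Extendable. -/
/-!
Let `w` synchronize onto `p`, and let `v` be a word of a balancing family with `p ∈ T := S·v⁻¹`.
Then `|T·w⁻¹| = n ≠ |S|`. Since `|T·u⁻¹|` is a linear functional of the translate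
`q ↦ [q·u ∈ T]`, and the span of translates by words of length `≤ t` grows with `t` and
stabilizes as soon as two consecutive spans agree, hence by `t = n`, some word `u` with
`|u| ≤ n` already has `|S·(uv)⁻¹| = |T·u⁻¹| ≠ |S|`. Prefixing `u` keeps the family balancing,
so the sizes `|S·(uvᵢ)⁻¹|` average to `|S|`; one of them differs from `|S|`, so one exceeds it,
and `|uvᵢ| < n + (k-1)n = kn`.
-/

open Finset Module

theorem Submodule.exists_le_finrank_eq_succ {K V : Type*} [DivisionRing K] [AddCommGroup V]
    [Module K V] [FiniteDimensional K V] {W : ℕ → Submodule K V} (hW : Monotone W) :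
    ∃ t ≤ finrank K V, W t = W (t + 1) := by
  by_contra! hne
  have hlt : ∀ t ≤ finrank K V, W t < W (t + 1) := fun t ht =>
    (hW t.le_succ).lt_of_ne (hne t ht)
  have hgrow : ∀ t ≤ finrank K V + 1, t ≤ finrank K (W t) := by
    intro t
    induction t with
    | zero => exact fun _ => Nat.zero_le _
    | succ t ih =>
      intro ht
      have := Submodule.finrank_lt_finrank_of_lt (hlt t (by omega))
      have := ih (by omega)
      omega
  have := hgrow _ le_rfl
  have := Submodule.finrank_le (W (finrank K V + 1))
  omega

theorem Finset.exists_lt_of_sum_eq_card_nsmul {ι M : Type*} [Fintype ι] [AddCommMonoid M]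
    [LinearOrder M] [IsOrderedCancelAddMonoid M] {a : ι → M} {b : M}
    (hsum : ∑ i, a i = Fintype.card ι • b) {j : ι} (hj : a j ≠ b) : ∃ i, b < a i := by
  by_contra! hle
  have := Finset.sum_lt_sum (s := univ) (fun i _ => hle i) ⟨j, mem_univ j, (hle j).lt_of_ne hj⟩
  simp [hsum] at this

section Automaton

variable {Q A : Type*} (δ : Q → A → Q)

section Shifts

variable {K : Type*} [Field K] (f : Q → K)

def shiftSpan (t : ℕ) : Submodule K (Q → K) :=
  Submodule.span K {g | ∃ u : List A, u.length ≤ t ∧ g = fun q => f (act δ q u)}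

theorem shiftSpan_mono : Monotone (shiftSpan δ f) := fun _ _ hst =>
  Submodule.span_mono fun _ ⟨u, hu, hg⟩ => ⟨u, hu.trans hst, hg⟩

theorem map_funLeft_shiftSpan_le (a : A) (t : ℕ) :
    (shiftSpan δ f t).map (LinearMap.funLeft K K (δ · a)) ≤ shiftSpan δ f (t + 1) := by
  rw [shiftSpan, Submodule.map_span]
  refine Submodule.span_mono ?_
  rintro _ ⟨_, ⟨u, hu, rfl⟩, rfl⟩
  exact ⟨a :: u, by simpa using hu, rfl⟩

theorem shift_mem_shiftSpan_of_eq_succ {t : ℕ} (ht : shiftSpan δ f t = shiftSpan δ f (t + 1))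
    (u : List A) : (fun q => f (act δ q u)) ∈ shiftSpan δ f t := by
  induction u with
  | nil => exact Submodule.subset_span ⟨[], Nat.zero_le _, rfl⟩
  | cons a u ih =>
    rw [ht]
    exact map_funLeft_shiftSpan_le δ f a t (Submodule.mem_map_of_mem ih)

variable [Fintype Q]

theorem shift_mem_shiftSpan_card (u : List A) :
    (fun q => f (act δ q u)) ∈ shiftSpan δ f (Fintype.card Q) := by
  obtain ⟨t, ht, hstab⟩ := Submodule.exists_le_finrank_eq_succ (shiftSpan_mono δ f)
  rw [finrank_fintype_fun_eq_card] at ht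
  exact shiftSpan_mono δ f ht (shift_mem_shiftSpan_of_eq_succ δ f hstab u)

theorem sum_act_eq_zero_of_forall_length_le_card
    (h : ∀ u : List A, u.length ≤ Fintype.card Q → ∑ q, f (act δ q u) = 0) (u : List A) :
    ∑ q, f (act δ q u) = 0 := by
  let φ : (Q → K) →ₗ[K] K := ∑ q, LinearMap.proj q
  have hφ (g : Q → K) : φ g = ∑ q, g q := by simp [φ]
  have hker : shiftSpan δ f (Fintype.card Q) ≤ LinearMap.ker φ := by
    rw [shiftSpan, Submodule.span_le]
    rintro _ ⟨u, hu, rfl⟩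
    simpa [hφ] using h u hu
  simpa [hφ] using hker (shift_mem_shiftSpan_card δ f u)

end Shifts

variable [Fintype Q] [DecidableEq Q]

theorem mem_preim {S : Finset Q} {w : List A} {q : Q} : q ∈ preim δ S w ↔ act δ q w ∈ S := by
  simp [preim]

theorem preim_append (S : Finset Q) (u v : List A) :
    preim δ S (u ++ v) = preim δ (preim δ S v) u := by
  ext q
  simp [mem_preim, act, List.foldl_append]

theorem sum_ite_act_mem {K : Type*} [Semiring K] (T : Finset Q) (u : List A) :
    ∑ q, (if act δ q u ∈ T then (1 : K) else 0) = #(preim δ T u) :=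
  Finset.sum_boole _ _

theorem card_preim_eq_of_forall_length_le_card (T : Finset Q) (c : ℕ)
    (h : ∀ u : List A, u.length ≤ Fintype.card Q → #(preim δ T u) = c) (u : List A) :
    #(preim δ T u) = c := by
  rcases (Fintype.card Q).eq_zero_or_pos with hQ | hQ
  · have : IsEmpty Q := Fintype.card_eq_zero_iff.mp hQ
    rw [← h [] hQ.ge, Finset.eq_empty_of_isEmpty (preim δ T u),
      Finset.eq_empty_of_isEmpty (preim δ T [])]
  let f : Q → ℚ := fun q => Fintype.card Q * (if q ∈ T then 1 else 0) - c
  have hf (u : List A) : ∑ q, f (act δ q u) = Fintype.card Q * ((#(preim δ T u) : ℚ) - c) := by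
    simp only [f, Finset.sum_sub_distrib, ← Finset.mul_sum, sum_ite_act_mem, Finset.sum_const,
      Finset.card_univ, nsmul_eq_mul]
    ring
  have := sum_act_eq_zero_of_forall_length_le_card δ f
    (fun u hu => by rw [hf, h u hu, sub_self, mul_zero]) u
  rw [hf] at this
  have hQ' : (Fintype.card Q : ℚ) ≠ 0 := by positivity
  exact_mod_cast sub_eq_zero.mp ((mul_eq_zero.mp this).resolve_left hQ')

theorem preim_eq_univ_of_act_eq {T : Finset Q} {w : List A} {p : Q}
    (hw : ∀ q, act δ q w = p) (hp : p ∈ T) : preim δ T w = univ := by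
  ext q
  simp [mem_preim, hw, hp]

theorem exists_length_le_card_preim_ne_of_sync {T : Finset Q} {w : List A} {p : Q} {c : ℕ}
    (hw : ∀ q, act δ q w = p) (hp : p ∈ T) (hc : c ≠ Fintype.card Q) :
    ∃ u : List A, u.length ≤ Fintype.card Q ∧ #(preim δ T u) ≠ c := by
  by_contra! h
  have := card_preim_eq_of_forall_length_le_card δ T c h w
  rw [preim_eq_univ_of_act_eq δ hw hp, card_univ] at this
  exact hc this.symm

def IsBalancedBy {ι : Type*} [Fintype ι] (S : Finset Q) (v : ι → List A) : Prop :=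
  ∀ q, ∑ i, (if q ∈ preim δ S (v i) then (1 : ℝ) else 0) =
    Fintype.card ι * (#S / Fintype.card Q)

namespace IsBalancedBy

variable {δ} {ι : Type*} [Fintype ι] {S : Finset Q} {v : ι → List A}

theorem append_left (hv : IsBalancedBy δ S v) (u : List A) :
    IsBalancedBy δ S (fun i => u ++ v i) := by
  intro q
  have := hv (act δ q u)
  simp only [preim_append, mem_preim] at this ⊢
  exact this

theorem sum_card_preim [Nonempty Q] (hv : IsBalancedBy δ S v) :
    ∑ i, #(preim δ S (v i)) = Fintype.card ι * #S := by
  have hQ : (Fintype.card Q : ℝ) ≠ 0 := by positivity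
  have : ∑ i, (#(preim δ S (v i)) : ℝ) = Fintype.card ι * #S := calc
    _ = ∑ i, ∑ q, if q ∈ preim δ S (v i) then (1 : ℝ) else 0 := by simp
    _ = ∑ q : Q, Fintype.card ι * (#S / Fintype.card Q : ℝ) :=
      Finset.sum_comm.trans (Finset.sum_congr rfl fun q _ => hv q)
    _ = Fintype.card ι * #S := by
      rw [sum_const, card_univ, nsmul_eq_mul]
      field_simp
  exact_mod_cast this

theorem exists_card_lt_card_preim [Nonempty Q] (hv : IsBalancedBy δ S v) {j : ι}
    (hj : #(preim δ S (v j)) ≠ #S) : ∃ i, #S < #(preim δ S (v i)) :=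
  exists_lt_of_sum_eq_card_nsmul hv.sum_card_preim hj

theorem exists_mem_preim [Nonempty ι] (hv : IsBalancedBy δ S v) (hS : S.Nonempty) (q : Q) :
    ∃ i, q ∈ preim δ S (v i) := by
  have : 0 < #S := hS.card_pos
  have : Nonempty Q := hS.to_type
  have hpos : (0 : ℝ) < Fintype.card ι * (#S / Fintype.card Q) := by positivity
  obtain ⟨i, -, hi⟩ := exists_ne_zero_of_sum_ne_zero ((hv q).trans_ne hpos.ne')
  exact ⟨i, by simpa using hi⟩

theorem exists_length_le_card_lt_card_preim_append [Nonempty ι] (hv : IsBalancedBy δ S v)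
    (hS : S.Nonempty) (hSne : S ≠ univ) (hsync : ∃ (w : List A) (p : Q), ∀ q, act δ q w = p) :
    ∃ u : List A, u.length ≤ Fintype.card Q ∧ ∃ i, #S < #(preim δ S (u ++ v i)) := by
  have : Nonempty Q := hS.to_type
  obtain ⟨w, p, hw⟩ := hsync
  obtain ⟨j, hp⟩ := hv.exists_mem_preim hS p
  obtain ⟨u, hu, hne⟩ := exists_length_le_card_preim_ne_of_sync δ hw hp
    ((card_lt_card (ssubset_univ_iff.mpr hSne)).trans_eq card_univ).ne
  rw [← preim_append] at hne
  exact ⟨u, hu, (hv.append_left u).exists_card_lt_card_preim hne⟩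

end IsBalancedBy

end Automaton

theorem stmt14_general {Q A : Type*} [Fintype Q] [DecidableEq Q] (δ : Q → A → Q)
    (n k : ℕ) (hn : Fintype.card Q = n)
    (hsync : ∃ (w : List A) (p : Q), ∀ q : Q, act δ q w = p)
    (hbal : ∀ S : Finset Q, S.Nonempty → S ≠ Finset.univ →
      ∃ (m : ℕ) (v : Fin m → List A), 0 < m ∧
        (∀ i, (v i).length < (k - 1) * n) ∧
        ∀ q : Q, (∑ i : Fin m, (if q ∈ preim δ S (v i) then (1 : ℝ) else 0)) =
          (m : ℝ) * ((S.card : ℝ) / (n : ℝ)) *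
            (if q ∈ (Finset.univ : Finset Q) then (1 : ℝ) else 0)) :
    ∀ S : Finset Q, S.Nonempty → S ≠ Finset.univ →
      ∃ v : List A, v.length ≤ k * n ∧ S.card < (preim δ S v).card := by
  intro S hS hSne
  obtain ⟨m, v, hm, hlen, hbal⟩ := hbal S hS hSne
  have hv : IsBalancedBy δ S v := by simpa [IsBalancedBy, hn] using hbal
  have : Nonempty (Fin m) := ⟨⟨0, hm⟩⟩
  obtain ⟨u, hu, i, hi⟩ := hv.exists_length_le_card_lt_card_preim_append hS hSne hsync
  refine ⟨u ++ v i, ?_, hi⟩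
  have := hlen i
  rw [Nat.sub_one_mul] at this
  rw [List.length_append]
  omega

theorem stmt14 {Q A : Type*} [Fintype Q] [DecidableEq Q] (δ : Q → A → Q)
    (n k : ℕ) (hn : Fintype.card Q = n)
    (hsync : ∃ (w : List A) (p : Q), ∀ q : Q, act δ q w = p)
    (hsc : ∀ p q : Q, ∃ u : List A, act δ p u = q)
    (hbal : ∀ S : Finset Q, S.Nonempty → S ≠ Finset.univ →
      ∃ (m : ℕ) (v : Fin m → List A), 0 < m ∧
        (∀ i, (v i).length < (k - 1) * n) ∧
        ∀ q : Q, (∑ i : Fin m, (if q ∈ preim δ S (v i) then (1 : ℝ) else 0)) =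
          (m : ℝ) * ((S.card : ℝ) / (n : ℝ)) *
            (if q ∈ (Finset.univ : Finset Q) then (1 : ℝ) else 0)) :
    ∀ S : Finset Q, S.Nonempty → S ≠ Finset.univ →
      ∃ v : List A, v.length ≤ k * n ∧ S.card < (preim δ S v).card :=
  stmt14_general δ n k hn hsync hbal
end

section
/- For the automaton A(m, k), the word v = a(ba^m)^{m-1}ba is synchronizing when k relates so that the Extension Algorithm with C_s = {q₀, q₁}, v_s = ba, C_e = {q₀, …, q_m}, v_e = a produces it; moreover |v| = m² + 2, and (for A(m,k) with n = m+k+1 states) this word is a shortest synchronizing word, so the shortest synchronizing word of A(m,k) has length exactly (n - k - 1)² + 2. -/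
namespace AutomatonA

open Fin.NatCast Fin.CommRing Finset

variable {m : ℕ}

def arc (i : Fin (m + 1)) (r : ℕ) : Finset (Fin (m + 1)) :=
  (range r).image fun t : ℕ => i + t

lemma mem_arc {i x : Fin (m + 1)} {r : ℕ} : x ∈ arc i r ↔ ∃ t < r, i + t = x := by
  simp [arc]

lemma card_arc_le (i : Fin (m + 1)) (r : ℕ) : #(arc i r) ≤ r :=
  card_image_le.trans (card_range r).le

lemma arc_eq_univ (i : Fin (m + 1)) {r : ℕ} (hr : m + 1 ≤ r) : arc i r = univ :=
  eq_univ_of_forall fun x => mem_arc.2 ⟨(x - i).val, by omega, by simp⟩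

lemma add_one_mem_arc_iff {i x : Fin (m + 1)} {r : ℕ} :
    x + 1 ∈ arc i r ↔ x ∈ arc (i - 1) r := by
  simp only [mem_arc, sub_add_eq_add_sub, sub_eq_iff_eq_add]

lemma eq_or_mem_arc_of_add_one_mem {i x : Fin (m + 1)} {r : ℕ} (h : x + 1 ∈ arc i r) :
    i = x + 1 ∨ x ∈ arc i r := by
  obtain ⟨_ | t, ht, hx⟩ := mem_arc.1 h
  · left; simpa using hx
  · right
    refine mem_arc.2 ⟨t, by omega, add_right_cancel (b := 1) ?_⟩
    rw [← hx]; push_cast; ring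

lemma arc_add_one_subset (i : Fin (m + 1)) (r : ℕ) : arc (i + 1) r ⊆ arc i (r + 1) := by
  intro x hx
  obtain ⟨t, ht, rfl⟩ := mem_arc.1 hx
  exact mem_arc.2 ⟨t + 1, by omega, by push_cast; ring⟩

/-- Starting from an arc of length `r` at `qᵢ`, the word `a^(-i)` moves it to `q₀`, and
`b a^m` turns an arc of length `r ≥ 3` at `q₀` into an arc of length `r - 1` at `q₀`,
while `b a` collapses an arc of length `2` at `q₀`. -/
def arcCost (i : Fin (m + 1)) (r : ℕ) : ℕ := 2 + (r - 2) * (m + 1) + (-i).val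

lemma arcCost_sub_one_le (i : Fin (m + 1)) (r : ℕ) : arcCost (i - 1) r ≤ arcCost i r + 1 := by
  have : (-i + 1).val ≤ (-i).val + 1 := by rw [Fin.val_add_one]; split_ifs <;> omega
  rw [arcCost, arcCost, show -(i - 1) = -i + 1 by ring]
  omega

lemma arcCost_zero_succ (hm : 2 ≤ m) {r : ℕ} (hr : 2 ≤ r) :
    arcCost (0 : Fin (m + 1)) (r + 1) = arcCost (2 : Fin (m + 1)) r + 2 := by
  have h2 : (2 : Fin (m + 1)).val = 2 := by simp [Nat.mod_eq_of_lt (show 2 < m + 1 by omega)]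
  have hneg : (-2 : Fin (m + 1)).val = m - 1 := by
    rw [Fin.val_neg, if_neg (fun h => by simp [h] at h2), h2]; omega
  obtain ⟨r, rfl⟩ : ∃ s, r = s + 2 := ⟨r - 2, by omega⟩
  simp only [arcCost, neg_zero, Fin.val_zero, hneg, show r + 1 + 2 - 2 = r + 1 by omega,
    Nat.add_sub_cancel, add_mul]
  omega

noncomputable def cyclePotential (T : Finset (Fin (m + 1))) : ℕ :=
  if #T ≤ 1 then 0 else sInf {c | ∃ i r, 2 ≤ r ∧ T ⊆ arc i r ∧ arcCost i r = c}

lemma cyclePotential_of_card_le_one {T : Finset (Fin (m + 1))} (hT : #T ≤ 1) :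
    cyclePotential T = 0 :=
  if_pos hT

lemma cyclePotential_le_arcCost {T : Finset (Fin (m + 1))} {i : Fin (m + 1)} {r : ℕ}
    (hr : 2 ≤ r) (hT : T ⊆ arc i r) : cyclePotential T ≤ arcCost i r := by
  unfold cyclePotential
  split_ifs
  · exact Nat.zero_le _
  · exact Nat.sInf_le ⟨i, r, hr, hT, rfl⟩

lemma exists_arcCost_eq_cyclePotential {T : Finset (Fin (m + 1))} (hT : 2 ≤ #T) :
    ∃ i r, 2 ≤ r ∧ T ⊆ arc i r ∧ arcCost i r = cyclePotential T := by
  rw [cyclePotential, if_neg (by omega)]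
  exact Nat.sInf_mem (s := {c | ∃ i r, 2 ≤ r ∧ T ⊆ arc i r ∧ arcCost i r = c})
    ⟨_, 0, m + 2, by omega, by rw [arc_eq_univ 0 (r := m + 2) (by omega)]; exact subset_univ T, rfl⟩

lemma cyclePotential_mono {T T' : Finset (Fin (m + 1))} (h : T ⊆ T') :
    cyclePotential T ≤ cyclePotential T' := by
  rcases le_or_gt #T 1 with hT | hT
  · rw [cyclePotential_of_card_le_one hT]; exact Nat.zero_le _
  · obtain ⟨i, r, hr, hT', heq⟩ := exists_arcCost_eq_cyclePotential (hT.trans_le (card_le_card h))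
    exact heq ▸ cyclePotential_le_arcCost hr (h.trans hT')

lemma cyclePotential_le_arcCost_add_one {T : Finset (Fin (m + 1))} {i : Fin (m + 1)} {r : ℕ}
    (hr : 2 ≤ r) (h0 : 0 ∈ arc (i - 1) r)
    (hT : ∀ x ∈ T, x ≠ 0 → x + 1 ∈ arc i r) : cyclePotential T ≤ arcCost i r + 1 := by
  refine (cyclePotential_le_arcCost hr fun x hx => ?_).trans (arcCost_sub_one_le i r)
  by_cases hx0 : x = 0
  · exact hx0 ▸ h0
  · exact add_one_mem_arc_iff.1 (hT x hx hx0)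

lemma cyclePotential_le_image_add_one (T : Finset (Fin (m + 1))) :
    cyclePotential T ≤ cyclePotential (T.image (· + 1)) + 1 := by
  rcases le_or_gt #T 1 with hT | hT
  · rw [cyclePotential_of_card_le_one hT]; exact Nat.zero_le _
  have hcard : #(T.image (· + 1)) = #T := card_image_of_injective _ (add_left_injective 1)
  obtain ⟨i, r, hr, hsub, heq⟩ := exists_arcCost_eq_cyclePotential (T := T.image (· + 1)) (by omega)
  rw [← heq]
  refine (cyclePotential_le_arcCost hr fun x hx => ?_).trans (arcCost_sub_one_le i r)
  exact add_one_mem_arc_iff.1 (hsub (mem_image_of_mem _ hx))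

lemma cyclePotential_le_insert_two (T : Finset (Fin (m + 1))) :
    cyclePotential T ≤ cyclePotential (insert 2 ((T.erase 0).image (· + 1))) + 2 := by
  set B := insert 2 ((T.erase 0).image (· + 1))
  have hB : ∀ x ∈ T, x ≠ 0 → x + 1 ∈ B := fun x hx hx0 =>
    mem_insert_of_mem (mem_image_of_mem _ (mem_erase.2 ⟨hx0, hx⟩))
  have hzero : ∀ r, (0 : Fin (m + 1)) ∈ arc 0 (r + 1) := fun r => mem_arc.2 ⟨0, by omega, by simp⟩
  rcases le_or_gt #B 1 with hB1 | hB1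
  · have hT : T ⊆ arc 0 2 := fun x hx => by
      by_cases hx0 : x = 0
      · exact hx0 ▸ hzero 1
      have hx : x + 1 = 2 := card_le_one.1 hB1 _ (hB x hx hx0) _ (mem_insert_self _ _)
      exact mem_arc.2 ⟨1, by omega, by push_cast; linear_combination -hx⟩
    exact (cyclePotential_le_arcCost le_rfl hT).trans (by simp [arcCost])
  obtain ⟨i, r, hr, hsub, heq⟩ := exists_arcCost_eq_cyclePotential hB1
  rw [← heq]
  by_cases h0' : 0 ∈ arc (i - 1) r
  · exact (cyclePotential_le_arcCost_add_one hr h0' fun x hx hx0 => hsub (hB x hx hx0)).trans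
      (by omega)
  -- The optimal arc for `B` starts at `q₂` and misses `q₁`, so it does not wrap around.
  have h1 : (1 : Fin (m + 1)) ∉ arc i r := fun h => h0' (add_one_mem_arc_iff.1 (by simpa using h))
  have hi : i = 2 := by
    have h2 : (1 : Fin (m + 1)) + 1 ∈ arc i r := by
      rw [one_add_one_eq_two]; exact hsub (mem_insert_self _ _)
    exact ((eq_or_mem_arc_of_add_one_mem h2).resolve_right h1).trans one_add_one_eq_two
  have hrm : r ≤ m := by
    by_contra
    exact h1 (arc_eq_univ i (r := r) (by omega) ▸ mem_univ _)
  subst hi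
  have hT : T ⊆ arc 0 (r + 1) := fun x hx => by
    by_cases hx0 : x = 0
    · exact hx0 ▸ hzero r
    have hx1 : x ∈ arc (0 + 1) r := by
      have := add_one_mem_arc_iff.1 (hsub (hB x hx hx0))
      rwa [show (2 : Fin (m + 1)) - 1 = 0 + 1 by ring] at this
    exact arc_add_one_subset 0 r hx1
  exact (cyclePotential_le_arcCost (by omega) hT).trans (arcCost_zero_succ (by omega) hr).le

lemma sq_add_one_le_cyclePotential_univ (hm : 1 ≤ m) :
    m ^ 2 + 1 ≤ cyclePotential (univ : Finset (Fin (m + 1))) := by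
  obtain ⟨i, r, hr, hsub, heq⟩ :=
    exists_arcCost_eq_cyclePotential (T := (univ : Finset (Fin (m + 1)))) (by simp; omega)
  have hrm : m + 1 ≤ r := by simpa using (card_le_card hsub).trans (card_arc_le i r)
  rw [← heq, arcCost]
  obtain ⟨m, rfl⟩ : ∃ n, m = n + 1 := ⟨m - 1, by omega⟩
  nlinarith [Nat.sub_add_cancel hr, Nat.mul_le_mul_right (m + 2) (show m ≤ r - 2 by omega)]

variable {k : ℕ}

lemma actA_cons (q : QA m k) (l : Bool) (w : List Bool) :
    actA m k q (l :: w) = actA m k (deltaA m k q l) w := rfl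

lemma actA_append (q : QA m k) (u w : List Bool) :
    actA m k q (u ++ w) = actA m k (actA m k q u) w :=
  List.foldl_append

@[simp] lemma deltaA_inl_false (i : Fin (m + 1)) :
    deltaA m k (.inl i) false = .inl (i + 1) := rfl

@[simp] lemma deltaA_inr_false (j : Fin k) : deltaA m k (.inr j) false = .inl 2 := rfl

lemma deltaA_inl_true_of_ne_zero {i : Fin (m + 1)} (hi : i ≠ 0) :
    deltaA m k (.inl i) true = .inl i := by
  simp [deltaA, hi]

lemma deltaA_inl_zero_true (hk : 0 < k) : deltaA m k (.inl 0) true = .inr ⟨0, hk⟩ := by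
  simp [deltaA, hk]

lemma deltaA_inr_true (j : Fin k) :
    deltaA m k (.inr j) true = .inl 0 ∨ ∃ j', deltaA m k (.inr j) true = .inr j' := by
  simp only [deltaA]
  split_ifs <;> simp

lemma deltaA_true_surjective (hk : 0 < k) : Function.Surjective (deltaA m k · true) := by
  rintro (i | ⟨_ | j, hj⟩)
  · by_cases hi : i = 0
    · exact ⟨.inr ⟨k - 1, by omega⟩, by simp [deltaA, hi, show ¬ k - 1 + 1 < k by omega]⟩
    · exact ⟨.inl i, deltaA_inl_true_of_ne_zero hi⟩
  · exact ⟨.inl 0, deltaA_inl_zero_true hk⟩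
  · exact ⟨.inr ⟨j, by omega⟩, by simp [deltaA, hj]⟩

/-- A state `sⱼ` is either carried to `q₀` by letters `b`, or sent to `q₂` by one letter `a`. -/
noncomputable def potential (S : Finset (QA m k)) : ℕ :=
  if S.toRight.Nonempty then
    min (cyclePotential (insert 0 S.toLeft))
      (cyclePotential (insert 2 (S.toLeft.image (· + 1))) + 1)
  else cyclePotential S.toLeft

lemma potential_le_insert_zero (S : Finset (QA m k)) :
    potential S ≤ cyclePotential (insert 0 S.toLeft) := by
  unfold potential
  split_ifs
  · exact min_le_left _ _
  · exact cyclePotential_mono (subset_insert _ _)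

lemma potential_eq_zero_of_subset_singleton {S : Finset (QA m k)} {p : QA m k} (h : S ⊆ {p}) :
    potential S = 0 := by
  cases p with
  | inl i =>
    have hs : ¬ S.toRight.Nonempty := fun ⟨j, hj⟩ => by simpa using h (mem_toRight.1 hj)
    rw [potential, if_neg hs, cyclePotential_of_card_le_one]
    exact card_le_one.2 fun a ha b hb => by
      have := h (mem_toLeft.1 ha); have := h (mem_toLeft.1 hb); simp_all
  | inr j =>
    have hl : S.toLeft = ∅ := eq_empty_of_forall_notMem fun i hi => by
      simpa using h (mem_toLeft.1 hi)
    have := potential_le_insert_zero S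
    rwa [hl, cyclePotential_of_card_le_one (by simp), Nat.le_zero] at this

lemma potential_le_image_true (hk : 0 < k) (S : Finset (QA m k)) :
    potential S ≤ potential (S.image (deltaA m k · true)) + 1 := by
  set S' := S.image (deltaA m k · true)
  have hfix : S.toLeft.erase 0 ⊆ S'.toLeft := fun i hi => by
    obtain ⟨hi0, hi⟩ := mem_erase.1 hi
    exact mem_toLeft.2 (deltaA_inl_true_of_ne_zero hi0 ▸ mem_image_of_mem _ (mem_toLeft.1 hi))
  have hzero : 0 ∈ S.toLeft → S'.toRight.Nonempty := fun h =>
    ⟨⟨0, hk⟩, mem_toRight.2 (deltaA_inl_zero_true hk ▸ mem_image_of_mem _ (mem_toLeft.1 h))⟩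
  have hs : S.toRight.Nonempty → 0 ∈ S'.toLeft ∨ S'.toRight.Nonempty := by
    rintro ⟨j, hj⟩
    have hj' := mem_image_of_mem (deltaA m k · true) (mem_toRight.1 hj)
    rcases deltaA_inr_true j with h | ⟨j', h⟩
    · exact .inl (mem_toLeft.2 (h ▸ hj'))
    · exact .inr ⟨j', mem_toRight.2 (h ▸ hj')⟩
  have hins : insert 0 S.toLeft ⊆ insert 0 S'.toLeft := by
    intro x hx
    rcases eq_or_ne x 0 with rfl | hx0
    · exact mem_insert_self _ _
    · exact mem_insert_of_mem (hfix (mem_erase.2 ⟨hx0, (mem_insert.1 hx).resolve_left hx0⟩))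
  by_cases hs' : S'.toRight.Nonempty
  · have h1 : potential S ≤ cyclePotential (insert 0 S'.toLeft) :=
      (potential_le_insert_zero S).trans (cyclePotential_mono hins)
    have h2 : potential S ≤ cyclePotential (insert 2 (S'.toLeft.image (· + 1))) + 2 := by
      refine (potential_le_insert_zero S).trans ((cyclePotential_le_insert_two _).trans ?_)
      rw [erase_insert_eq_erase]
      exact Nat.add_le_add_right
        (cyclePotential_mono (insert_subset_insert _ (image_subset_image hfix))) 2
    rw [show potential S' = _ from if_pos hs']
    omega
  · rw [show potential S' = cyclePotential S'.toLeft from if_neg hs']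
    have h0 : 0 ∉ S.toLeft := fun h => hs' (hzero h)
    by_cases hsS : S.toRight.Nonempty
    · have hsub : insert 0 S.toLeft ⊆ S'.toLeft :=
        hins.trans (insert_subset ((hs hsS).resolve_right hs') subset_rfl)
      exact ((potential_le_insert_zero S).trans (cyclePotential_mono hsub)).trans (Nat.le_succ _)
    · rw [potential, if_neg hsS]
      rw [erase_eq_of_notMem h0] at hfix
      exact (cyclePotential_mono hfix).trans (Nat.le_succ _)

lemma potential_le_image_false (S : Finset (QA m k)) :
    potential S ≤ potential (S.image (deltaA m k · false)) + 1 := by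
  set S' := S.image (deltaA m k · false)
  have hs' : ¬ S'.toRight.Nonempty := by
    rintro ⟨j, hj⟩
    obtain ⟨(i | j'), -, h⟩ := mem_image.1 (mem_toRight.1 hj) <;> simp at h
  have hshift : S.toLeft.image (· + 1) ⊆ S'.toLeft := by
    intro x hx
    obtain ⟨i, hi, rfl⟩ := mem_image.1 hx
    exact mem_toLeft.2 (mem_image_of_mem (deltaA m k · false) (mem_toLeft.1 hi))
  have htwo : S.toRight.Nonempty → 2 ∈ S'.toLeft := fun ⟨j, hj⟩ =>
    mem_toLeft.2 (mem_image_of_mem (deltaA m k · false) (mem_toRight.1 hj))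
  rw [show potential S' = cyclePotential S'.toLeft from if_neg hs']
  unfold potential
  split_ifs with hs
  · exact (min_le_right _ _).trans
      (Nat.add_le_add_right (cyclePotential_mono (insert_subset (htwo hs) hshift)) 1)
  · exact (cyclePotential_le_image_add_one _).trans
      (Nat.add_le_add_right (cyclePotential_mono hshift) 1)

lemma potential_le_length (hk : 0 < k) {S : Finset (QA m k)} {w : List Bool} {p : QA m k}
    (h : ∀ q ∈ S, actA m k q w = p) : potential S ≤ w.length := by
  induction w generalizing S with
  | nil => exact (potential_eq_zero_of_subset_singleton fun q hq => mem_singleton.2 (h q hq)).le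
  | cons l w ih =>
    have hstep : potential S ≤ potential (S.image (deltaA m k · l)) + 1 := by
      cases l
      exacts [potential_le_image_false S, potential_le_image_true hk S]
    refine hstep.trans (Nat.add_le_add_right (ih fun q hq => ?_) 1)
    obtain ⟨x, hx, rfl⟩ := mem_image.1 hq
    exact h x hx

lemma sq_add_two_le_length (hm : 1 ≤ m) (hk : 0 < k) {w : List Bool}
    (hw : ∃ p, ∀ q : QA m k, actA m k q w = p) : m ^ 2 + 2 ≤ w.length := by
  obtain ⟨p, hp⟩ := hw
  induction w with
  | nil => exact absurd ((hp (.inl 0)).trans (hp (.inr ⟨0, hk⟩)).symm) Sum.inl_ne_inr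
  | cons l w ih =>
    cases l with
    | false =>
      have hq : ∀ q ∈ (univ : Finset (Fin (m + 1))).disjSum (∅ : Finset (Fin k)),
          actA m k q w = p := by
        intro q hq
        obtain ⟨i, -, rfl⟩ : ∃ i ∈ univ, .inl i = q := by simpa using hq
        have := hp (.inl (i - 1))
        rwa [actA_cons, deltaA_inl_false, sub_add_cancel] at this
      have hlen := potential_le_length hk hq
      rw [potential, toRight_disjSum, if_neg (by simp), toLeft_disjSum] at hlen
      have := sq_add_one_le_cyclePotential_univ hm
      simp only [List.length_cons]
      omega
    | true =>
      have := ih fun q => by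
        obtain ⟨x, rfl⟩ := deltaA_true_surjective hk q
        exact hp x
      simp only [List.length_cons]
      omega

def syncWord (m : ℕ) : List Bool :=
  [false] ++ (List.replicate (m - 1) ([true] ++ List.replicate m false)).flatten ++ [true, false]

lemma length_syncWord (hm : 1 ≤ m) : (syncWord m).length = m ^ 2 + 2 := by
  obtain ⟨m, rfl⟩ : ∃ n, m = n + 1 := ⟨m - 1, by omega⟩
  simp [syncWord]
  ring

lemma actA_replicate_false (i : Fin (m + 1)) (t : ℕ) :
    actA m k (.inl i) (List.replicate t false) = .inl (i + t) := by
  induction t generalizing i with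
  | zero => simp [actA]
  | succ t ih =>
    rw [List.replicate_succ, actA_cons, deltaA_inl_false, ih]
    push_cast
    ring_nf

lemma actA_block (hm : 1 ≤ m) (hk : 0 < k) (i : Fin (m + 1)) :
    actA m k (.inl i) (true :: List.replicate m false) = .inl ⟨i - 1, by omega⟩ := by
  by_cases hi : i = 0
  · -- the detour `q₀ → s₁ → q₂ → ⋯ → q₀`
    obtain ⟨n, rfl⟩ : ∃ n, m = n + 1 := ⟨m - 1, by omega⟩
    rw [List.replicate_succ, actA_cons, hi, deltaA_inl_zero_true hk, actA_cons, deltaA_inr_false,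
      actA_replicate_false]
    have h : ((2 + n : ℕ) : Fin (n + 1 + 1)) = 0 := by
      rw [show 2 + n = n + 1 + 1 by omega]; exact Fin.natCast_self _
    push_cast at h
    rw [h]
    rfl
  · have hm1 : ((m : ℕ) : Fin (m + 1)) = -1 := eq_neg_of_add_eq_zero_left (by
      rw [← Nat.cast_one (R := Fin (m + 1)), ← Nat.cast_add, Fin.natCast_self])
    rw [actA_cons, deltaA_inl_true_of_ne_zero hi, actA_replicate_false, hm1, ← sub_eq_add_neg]
    congr 1
    ext
    rw [Fin.coe_sub_one, if_neg hi]

lemma actA_blocks (hm : 1 ≤ m) (hk : 0 < k) (i : Fin (m + 1)) (t : ℕ) :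
    actA m k (.inl i) (List.replicate t (true :: List.replicate m false)).flatten =
      .inl ⟨i - t, by omega⟩ := by
  induction t generalizing i with
  | zero => rfl
  | succ t ih =>
    rw [List.replicate_succ, List.flatten_cons, actA_append, actA_block hm hk, ih]
    congr 2
    simp only
    omega

lemma actA_syncWord (hm : 1 ≤ m) (hk : 0 < k) (q : QA m k) :
    actA m k q (syncWord m) = .inl 2 := by
  obtain ⟨i, hi⟩ : ∃ i : Fin (m + 1), deltaA m k q false = .inl i := by
    cases q
    exacts [⟨_, rfl⟩, ⟨_, rfl⟩]
  have h : actA m k q [false] = .inl i := hi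
  rw [syncWord, actA_append, actA_append, h, List.singleton_append, actA_blocks hm hk]
  by_cases h0 : i.val - (m - 1) = 0
  · simp only [h0]
    rw [actA_cons, show (⟨0, _⟩ : Fin (m + 1)) = 0 from rfl, deltaA_inl_zero_true hk]
    rfl
  · have hv : i.val - (m - 1) = 1 := by have := i.isLt; omega
    have h1 : (⟨i.val - (m - 1), by omega⟩ : Fin (m + 1)) = 1 :=
      Fin.ext (by rw [Fin.val_one', Nat.mod_eq_of_lt (by omega)]; exact hv)
    have h10 : (1 : Fin (m + 1)) ≠ 0 := fun h => by rw [Fin.one_eq_zero_iff] at h; omega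
    rw [h1, actA_cons, deltaA_inl_true_of_ne_zero h10, actA_cons, deltaA_inl_false,
      one_add_one_eq_two]
    rfl

end AutomatonA

theorem stmt17 (m k : ℕ) (hm : 1 ≤ m) (hk : 1 ≤ k) :
    let v : List Bool :=
      [false] ++ (List.replicate (m - 1) ([true] ++ List.replicate m false)).flatten
        ++ [true, false]
    (∃ p : QA m k, ∀ q : QA m k, actA m k q v = p) ∧
    v.length = m ^ 2 + 2 ∧
    (∀ w : List Bool, (∃ p : QA m k, ∀ q : QA m k, actA m k q w = p) →
      v.length ≤ w.length) ∧
    v.length = ((m + k + 1) - k - 1) ^ 2 + 2 := by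
  intro v
  have hlen : v.length = m ^ 2 + 2 := AutomatonA.length_syncWord hm
  refine ⟨⟨.inl 2, AutomatonA.actA_syncWord hm hk⟩, hlen,
    fun w hw => hlen ▸ AutomatonA.sq_add_two_le_length hm hk hw, ?_⟩
  rw [hlen, show m + k + 1 - k - 1 = m by omega]
end
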